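/- For every integer m ≥ 4, with Q_m(X) = X^{m-3}(X³ − X − 1) − (X³ + X² − 1) ∈ ℤ[X]: Φ₂(X) = X + 1 divides Q_m if and only if m ≡ 1 (mod 2); Φ₈(X) = X⁴ + 1 divides Q_m if and only if m ≡ 2 (mod 8); Φ₁₂(X) = X⁴ − X² + 1 divides Q_m if and only if m ≡ 1 (mod 12); Φ₁₈(X) = X⁶ − X³ + 1 divides Q_m if and only if m ≡ 17 (mod 18); and Φ₃₀(X) = X⁸ + X⁷ − X⁵ − X⁴ − X³ + X + 1 divides Q_m if and only if m ≡ 24 (mod 30). -/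

import Mathlib

/-!
Since `Φ_N ∣ X ^ N - 1`, divisibility of `Q_m` by `Φ_N` only depends on `(m - 3) % N`. For the
one admissible residue `r₀` an explicit cofactor exhibits the divisibility; every other residue
`r < N` is ruled out at `X = 2`, where `Φ_N(2)` does not divide `2 ^ r * 5 - 11`.
-/

open Polynomial

/-- For `m ≥ 4`, define `Q_m(X) = X ^ (m - 3) * (X ^ 3 - X - 1) - (X ^ 3 + X ^ 2 - 1) ∈ ℤ[X]`. -/
noncomputable def Qm (m : ℕ) : Polynomial ℤ :=
  X ^ (m - 3) * (X ^ 3 - X - 1) - (X ^ 3 + X ^ 2 - 1)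

section XPowMod

variable {R : Type*} [CommRing R] {Φ : R[X]} {N : ℕ}

theorem dvd_X_pow_sub_X_pow_mod (hΦ : Φ ∣ X ^ N - 1) (a : ℕ) : Φ ∣ X ^ a - X ^ (a % N) := by
  have h : (X ^ a - X ^ (a % N) : R[X]) = ((X ^ N) ^ (a / N) - 1) * X ^ (a % N) := by
    rw [sub_one_mul, ← pow_mul, ← pow_add, Nat.div_add_mod]
  rw [h]
  exact (hΦ.trans (by simpa using sub_dvd_pow_sub_pow (X ^ N : R[X]) 1 (a / N))).mul_right _

theorem dvd_X_pow_mul_sub_iff_mod (hΦ : Φ ∣ X ^ N - 1) (a : ℕ) (f g : R[X]) :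
    Φ ∣ X ^ a * f - g ↔ Φ ∣ X ^ (a % N) * f - g := by
  have h : X ^ a * f - g = (X ^ a - X ^ (a % N)) * f + (X ^ (a % N) * f - g) := by ring
  rw [h]
  exact dvd_add_right ((dvd_X_pow_sub_X_pow_mod hΦ a).mul_right f)

end XPowMod

noncomputable def QmShift (r : ℕ) : ℤ[X] :=
  X ^ r * (X ^ 3 - X - 1) - (X ^ 3 + X ^ 2 - 1)

theorem Qm_eq_QmShift (m : ℕ) : Qm m = QmShift (m - 3) := rfl

theorem eval_two_QmShift (r : ℕ) : (QmShift r).eval 2 = 2 ^ r * 5 - 11 := by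
  simp only [QmShift, eval_sub, eval_add, eval_mul, eval_pow, eval_X, eval_one]
  ring

theorem dvd_Qm_iff {Φ : ℤ[X]} {N r₀ : ℕ} (hN : 0 < N) (hΦ : Φ ∣ X ^ N - 1)
    (hr₀ : Φ ∣ QmShift r₀) (hsep : ∀ r < N, Φ.eval 2 ∣ 2 ^ r * 5 - 11 → r = r₀) (m : ℕ) :
    Φ ∣ Qm m ↔ (m - 3) % N = r₀ := by
  rw [Qm_eq_QmShift, QmShift, dvd_X_pow_mul_sub_iff_mod hΦ, ← QmShift]
  refine ⟨fun h => hsep _ (Nat.mod_lt _ hN) ?_, fun h => h ▸ hr₀⟩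
  rw [← eval_two_QmShift]
  exact eval_dvd h

theorem cyclotomic_dvd_Qm_iff (m : ℕ) (hm : 4 ≤ m) :
    (((X + 1 : Polynomial ℤ) ∣ Qm m) ↔ m % 2 = 1) ∧
    (((X ^ 4 + 1 : Polynomial ℤ) ∣ Qm m) ↔ m % 8 = 2) ∧
    (((X ^ 4 - X ^ 2 + 1 : Polynomial ℤ) ∣ Qm m) ↔ m % 12 = 1) ∧
    (((X ^ 6 - X ^ 3 + 1 : Polynomial ℤ) ∣ Qm m) ↔ m % 18 = 17) ∧
    (((X ^ 8 + X ^ 7 - X ^ 5 - X ^ 4 - X ^ 3 + X + 1 : Polynomial ℤ) ∣ Qm m) ↔ m % 30 = 24)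
    := by
  refine ⟨(dvd_Qm_iff (N := 2) (r₀ := 0) two_pos ⟨X - 1, by ring⟩
      ⟨-X, by rw [QmShift]; ring⟩ ?_ m).trans (by omega),
    (dvd_Qm_iff (N := 8) (r₀ := 7) (by norm_num) ⟨X ^ 4 - 1, by ring⟩
      ⟨1 - X ^ 2 - X ^ 3 - X ^ 4 + X ^ 6, by rw [QmShift]; ring⟩ ?_ m).trans (by omega),
    (dvd_Qm_iff (N := 12) (r₀ := 10) (by norm_num) ⟨-1 - X ^ 2 + X ^ 6 + X ^ 8, by ring⟩
      ⟨1 - X ^ 3 - X ^ 4 - X ^ 5 - X ^ 6 + X ^ 9, by rw [QmShift]; ring⟩ ?_ m).trans (by omega),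
    (dvd_Qm_iff (N := 18) (r₀ := 14) (by norm_num) ⟨-1 - X ^ 3 + X ^ 9 + X ^ 12, by ring⟩
      ⟨1 - X ^ 2 - X ^ 5 - X ^ 6 - X ^ 9 + X ^ 11, by rw [QmShift]; ring⟩ ?_ m).trans (by omega),
    (dvd_Qm_iff (N := 30) (r₀ := 21) (by norm_num)
      ⟨-1 + X - X ^ 2 - X ^ 5 + X ^ 6 - X ^ 7 + X ^ 15 - X ^ 16 + X ^ 17 + X ^ 20 - X ^ 21 + X ^ 22,
        by ring⟩
      ⟨1 - X - X ^ 6 - X ^ 10 - X ^ 15 + X ^ 16, by rw [QmShift]; ring⟩ ?_ m).trans (by omega)⟩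
  all_goals
    norm_num
    decide
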